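/- Let p ≥ 5 be a prime, let s, t : (ℤ/pℤ) ∖ {0} → ℂ satisfy s_{−a} = −s_a, t_{−a} = t_a, and the quadratic relations s_a s_b + s_b s_c + s_c s_a + t_a + t_b + t_c = 0 for all nonzero a, b, c with a + b + c = 0, and let (f_a)_{a≠0} be the standard solution, i.e., the unique family of formal power series f_a ∈ ℂ[[z]] with constant coefficient s_a, coefficient of z equal to t_a, satisfying −1 + z² f_a′ = −(1/(p−2)) ( Σ_{k≠0,a} (1 + z f_k)(1 + z f_{a−k}) + 2 s_a z (1 + z f_a) ). Then there exist constants C > 0 and c > 0 such that for every a and every n ≥ 0 the coefficient of z^n in f_a has absolute value at most C·c^n; in particular each f_a has positive radius of convergence. -/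

import Mathlib

/-!
Comparing coefficients of `z^(m+3)` in the defining equation of `f_a` gives
`((p-2)(m+2) - 2) f_a[m+2] = -(2 S + Z_a)`, where `S = Σ_{k≠0} f_k[m+2]` and `Z_a` involves only
coefficients of index `≤ m+1`. Summing over `a` gives `(p-2)(m+4) S = -Σ_a Z_a`, so `S`, and
then every `f_a[m+2]`, is bounded by the lower coefficients; for `p ≥ 5` the constants close up
to give `|f_a[n]| ≤ M (4M)^n` by strong induction, where `M ≥ 1` bounds `|s|` and `|t|`.
-/

open Finset PowerSeries

/-- A family `f` of formal power series (indexed by the nonzero residues mod p) is a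
*standard solution* for the data `(s, t)` if each `f a` has constant coefficient `s a`,
coefficient of `z` equal to `t a`, and the family satisfies (as an identity in ℂ[[z]])
`−1 + z² f_a′ = −(1/(p−2)) ( Σ_{k≠0,a} (1 + z f_k)(1 + z f_{a−k}) + 2 s_a z (1 + z f_a) )`. -/
def IsStandardSolution (p : ℕ) [NeZero p] (s t : ZMod p → ℂ)
    (f : ZMod p → PowerSeries ℂ) : Prop :=
  ∀ a : ZMod p, a ≠ 0 →
    PowerSeries.constantCoeff (f a) = s a ∧
    PowerSeries.coeff 1 (f a) = t a ∧
    -1 + PowerSeries.X ^ 2 * PowerSeries.derivative ℂ (f a) =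
      PowerSeries.C (-(1 / ((p : ℂ) - 2))) *
        ((∑ k ∈ univ.filter (fun k : ZMod p => k ≠ 0 ∧ k ≠ a),
            (1 + PowerSeries.X * f k) * (1 + PowerSeries.X * f (a - k))) +
          2 * PowerSeries.C (s a) * PowerSeries.X * (1 + PowerSeries.X * f a))

section Coefficients

variable {R : Type*} [CommRing R] (F G : R⟦X⟧) (m : ℕ)

theorem coeff_add_three_one_add_X_mul_mul_one_add_X_mul :
    coeff (m + 3) ((1 + X * F) * (1 + X * G)) =
      coeff (m + 2) F + coeff (m + 2) G + coeff (m + 1) (F * G) := by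
  have h : (1 + X * F) * (1 + X * G) = 1 + X * F + X * G + X ^ 2 * (F * G) := by ring
  simp [h, coeff_X_pow_mul', coeff_one]

theorem coeff_add_three_two_mul_C_mul_X_mul_one_add_X_mul (σ : R) :
    coeff (m + 3) (2 * C σ * X * (1 + X * F)) = 2 * σ * coeff (m + 1) F := by
  have h : 2 * C σ * X * (1 + X * F) = X * C (2 * σ) + X ^ 2 * (C (2 * σ) * F) := by
    rw [map_mul, map_ofNat]; ring
  rw [h, map_add, coeff_succ_X_mul, coeff_C, show m + 2 + 1 = m + 1 + 2 from rfl,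
    coeff_X_pow_mul, coeff_C_mul]
  simp

theorem coeff_add_three_neg_one_add_X_sq_mul_derivative :
    coeff (m + 3) (-1 + X ^ 2 * derivative R F) = (m + 2) * coeff (m + 2) F := by
  simp [coeff_X_pow_mul', coeff_derivative, coeff_one]
  ring

end Coefficients

theorem sum_filter_ne_zero_and_ne_apply_sub {G M : Type*} [AddCommGroup G] [Fintype G]
    [DecidableEq G] [AddCommMonoid M] (a : G) (g : G → M) :
    ∑ k ∈ univ.filter (fun k : G => k ≠ 0 ∧ k ≠ a), g (a - k) =
      ∑ k ∈ univ.filter (fun k : G => k ≠ 0 ∧ k ≠ a), g k :=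
  Finset.sum_nbij' (a - ·) (a - ·) (by simp +contextual [sub_eq_zero, eq_comm, eq_sub_iff_add_eq])
    (by simp +contextual [sub_eq_zero, eq_comm, eq_sub_iff_add_eq]) (by simp) (by simp) (by simp)

theorem norm_coeff_mul_le {R : Type*} [NormedCommRing R] {F G : R⟦X⟧} {M c : ℝ} {n : ℕ}
    (hF : ∀ j ≤ n, ‖coeff j F‖ ≤ M * c ^ j) (hG : ∀ j ≤ n, ‖coeff j G‖ ≤ M * c ^ j)
    (hM : 0 ≤ M) (hc : 0 ≤ c) :
    ‖coeff n (F * G)‖ ≤ (n + 1) * (M ^ 2 * c ^ n) := by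
  rw [coeff_mul]
  calc ‖∑ ij ∈ antidiagonal n, coeff ij.1 F * coeff ij.2 G‖
      ≤ ∑ ij ∈ antidiagonal n, ‖coeff ij.1 F‖ * ‖coeff ij.2 G‖ :=
        norm_sum_le_of_le _ fun _ _ => norm_mul_le _ _
    _ ≤ ∑ ij ∈ antidiagonal n, (M * c ^ ij.1) * (M * c ^ ij.2) := by
        gcongr with ij hij
        · exact hF _ (HasAntidiagonal.antidiagonal.fst_le hij)
        · exact hG _ (HasAntidiagonal.antidiagonal.snd_le hij)
    _ = (n + 1) * (M ^ 2 * c ^ n) := by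
        rw [Finset.sum_congr rfl fun ij hij => show _ = M ^ 2 * c ^ n by
          rw [← mem_antidiagonal.mp hij, pow_add]; ring]
        simp

section StandardSolution

variable {p : ℕ} [NeZero p] {s t : ZMod p → ℂ} {f : ZMod p → ℂ⟦X⟧}

/-- The terms of the coefficient of `z^(m+3)` in the bracket on the right-hand side of the
defining equation that involve only coefficients of index at most `m + 1`. -/
noncomputable def lowerOrderCoeff (s : ZMod p → ℂ) (f : ZMod p → ℂ⟦X⟧) (a : ZMod p) (m : ℕ) :
    ℂ :=
  ∑ k ∈ univ.filter (fun k : ZMod p => k ≠ 0 ∧ k ≠ a), coeff (m + 1) (f k * f (a - k)) +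
    2 * s a * coeff (m + 1) (f a)

theorem IsStandardSolution.coeff_add_two_eq (hf : IsStandardSolution p s t f) (hp : p ≠ 2)
    {a : ZMod p} (ha : a ≠ 0) (m : ℕ) :
    (((p : ℂ) - 2) * (m + 2) - 2) * coeff (m + 2) (f a) =
      -(2 * ∑ k ∈ univ.erase 0, coeff (m + 2) (f k) + lowerOrderCoeff s f a m) := by
  have hp' : (p : ℂ) - 2 ≠ 0 := sub_ne_zero.mpr (mod_cast hp)
  have h := congrArg (coeff (m + 3)) (hf a ha).2.2
  rw [coeff_add_three_neg_one_add_X_sq_mul_derivative, coeff_C_mul] at h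
  simp only [map_add, map_sum,
    coeff_add_three_one_add_X_mul_mul_one_add_X_mul,
    coeff_add_three_two_mul_C_mul_X_mul_one_add_X_mul, sum_add_distrib,
    sum_filter_ne_zero_and_ne_apply_sub a fun k => coeff (m + 2) (f k)] at h
  have hS : ∑ k ∈ univ.filter (fun k : ZMod p => k ≠ 0 ∧ k ≠ a), coeff (m + 2) (f k) =
      ∑ k ∈ univ.erase 0, coeff (m + 2) (f k) - coeff (m + 2) (f a) := by
    rw [eq_sub_iff_add_eq, ← sum_erase_add _ _ (mem_erase.mpr ⟨ha, mem_univ a⟩)]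
    congr 2
    ext k
    simp [and_comm]
  rw [hS] at h
  field_simp at h
  rw [lowerOrderCoeff]
  linear_combination h

theorem IsStandardSolution.sum_coeff_add_two_eq (hf : IsStandardSolution p s t f) (hp : p ≠ 2)
    (m : ℕ) :
    ((p : ℂ) - 2) * (m + 4) * ∑ k ∈ univ.erase 0, coeff (m + 2) (f k) =
      -∑ a ∈ univ.erase 0, lowerOrderCoeff s f a m := by
  have h := sum_congr rfl fun a (ha : a ∈ univ.erase (0 : ZMod p)) =>
    hf.coeff_add_two_eq hp (ne_of_mem_erase ha) m
  rw [← mul_sum, sum_neg_distrib, sum_add_distrib, sum_const, card_erase_of_mem (mem_univ 0),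
    card_univ, ZMod.card, nsmul_eq_mul, Nat.cast_sub NeZero.one_le] at h
  linear_combination h

theorem card_filter_ne_zero_and_ne {a : ZMod p} (ha : a ≠ 0) :
    #(univ.filter (fun k : ZMod p => k ≠ 0 ∧ k ≠ a)) = p - 2 := by
  have h : univ.filter (fun k : ZMod p => k ≠ 0 ∧ k ≠ a) = (univ.erase 0).erase a := by
    ext k; simp [and_comm]
  rw [h, card_erase_of_mem (mem_erase.mpr ⟨ha, mem_univ a⟩), card_erase_of_mem (mem_univ 0),
    card_univ, ZMod.card]
  omega

theorem norm_lowerOrderCoeff_le (hp : 2 ≤ p) {M c : ℝ} (hM : 0 ≤ M) (hc : 0 ≤ c) {m : ℕ}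
    (hcoeff : ∀ j ≤ m + 1, ∀ b ≠ 0, ‖coeff j (f b)‖ ≤ M * c ^ j) {a : ZMod p} (ha : a ≠ 0)
    (hs : ‖s a‖ ≤ M) :
    ‖lowerOrderCoeff s f a m‖ ≤ ((p - 2) * (m + 2) + 2) * (M ^ 2 * c ^ (m + 1)) :=
  calc ‖lowerOrderCoeff s f a m‖
      ≤ ∑ k ∈ univ.filter (fun k : ZMod p => k ≠ 0 ∧ k ≠ a), ‖coeff (m + 1) (f k * f (a - k))‖ +
          2 * ‖s a‖ * ‖coeff (m + 1) (f a)‖ :=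
        norm_add_le_of_le (norm_sum_le _ _) (by simp)
    _ ≤ ∑ k ∈ univ.filter (fun k : ZMod p => k ≠ 0 ∧ k ≠ a), (m + 1 + 1) * (M ^ 2 * c ^ (m + 1)) +
          2 * M * (M * c ^ (m + 1)) := by
        gcongr with k hk
        · rw [mem_filter] at hk
          exact_mod_cast norm_coeff_mul_le (fun j hj => hcoeff j hj k hk.2.1)
            (fun j hj => hcoeff j hj _ (sub_ne_zero.mpr (Ne.symm hk.2.2))) hM hc
        · exact hcoeff _ le_rfl a ha
    _ = ((p - 2) * (m + 2) + 2) * (M ^ 2 * c ^ (m + 1)) := by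
        rw [sum_const, card_filter_ne_zero_and_ne ha, nsmul_eq_mul, Nat.cast_sub hp]
        push_cast
        ring

theorem le_four_mul_of_le_of_le {q m x A S : ℝ} (hq : 3 ≤ q) (hm : 0 ≤ m) (hx : 0 ≤ x)
    (hS : q * (m + 4) * S ≤ (q + 1) * ((q * (m + 2) + 2) * x))
    (hA : (q * (m + 2) - 2) * A ≤ 2 * S + (q * (m + 2) + 2) * x) :
    A ≤ 4 * x := by
  have hu : 6 ≤ q * (m + 2) := by nlinarith
  have hpos : 0 < q * (m + 4) * (q * (m + 2) - 2) := by nlinarith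
  have hpoly : (q * (m + 2) + 2) * (q * (m + 6) + 2) ≤ 4 * (q * (m + 4) * (q * (m + 2) - 2)) := by
    nlinarith [mul_nonneg (by linarith : 0 ≤ q) (by linarith : 0 ≤ q * (m + 2) - 6)]
  refine le_of_mul_le_mul_left ?_ hpos
  linarith [mul_le_mul_of_nonneg_left hA (by positivity : 0 ≤ q * (m + 4)),
    mul_le_mul_of_nonneg_right hpoly hx]

theorem IsStandardSolution.norm_coeff_add_two_le (hf : IsStandardSolution p s t f) (hp : 5 ≤ p)
    {M c : ℝ} (hM : 0 ≤ M) (hc : 0 ≤ c) (hs : ∀ a ≠ 0, ‖s a‖ ≤ M) {m : ℕ}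
    (hcoeff : ∀ j ≤ m + 1, ∀ b ≠ 0, ‖coeff j (f b)‖ ≤ M * c ^ j) {a : ZMod p} (ha : a ≠ 0) :
    ‖coeff (m + 2) (f a)‖ ≤ 4 * (M ^ 2 * c ^ (m + 1)) := by
  have hp2 : p ≠ 2 := by omega
  have hpR : (5 : ℝ) ≤ p := by exact_mod_cast hp
  have hZ (b : ZMod p) (hb : b ≠ 0) := norm_lowerOrderCoeff_le (by omega) hM hc hcoeff hb (hs b hb)
  set S := ∑ k ∈ univ.erase 0, coeff (m + 2) (f k)
  refine le_four_mul_of_le_of_le (q := p - 2) (S := ‖S‖) (by linarith) m.cast_nonneg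
    (by positivity) ?_ ?_
  · calc ((p : ℝ) - 2) * (m + 4) * ‖S‖ = ‖((p : ℂ) - 2) * (m + 4) * S‖ := by
          rw [norm_mul, show ((p : ℂ) - 2) * (m + 4) = (((p - 2) * (m + 4) : ℝ) : ℂ) by
            push_cast; rfl, Complex.norm_of_nonneg (by nlinarith)]
      _ = ‖∑ b ∈ univ.erase 0, lowerOrderCoeff s f b m‖ := by
          rw [hf.sum_coeff_add_two_eq hp2, norm_neg]
      _ ≤ ∑ b ∈ univ.erase (0 : ZMod p), ((p - 2) * (m + 2) + 2) * (M ^ 2 * c ^ (m + 1)) :=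
          norm_sum_le_of_le _ fun b hb => hZ b (ne_of_mem_erase hb)
      _ = (p - 2 + 1) * (((p - 2) * (m + 2) + 2) * (M ^ 2 * c ^ (m + 1))) := by
          rw [sum_const, card_erase_of_mem (mem_univ 0), card_univ, ZMod.card, nsmul_eq_mul,
            Nat.cast_sub NeZero.one_le]
          ring
  · calc ((p - 2) * (m + 2) - 2) * ‖coeff (m + 2) (f a)‖
          = ‖(((p : ℂ) - 2) * (m + 2) - 2) * coeff (m + 2) (f a)‖ := by
          rw [norm_mul, show ((p : ℂ) - 2) * (m + 2) - 2 = (((p - 2) * (m + 2) - 2 : ℝ) : ℂ) by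
            push_cast; rfl, Complex.norm_of_nonneg (by nlinarith)]
      _ = ‖2 * S + lowerOrderCoeff s f a m‖ := by rw [hf.coeff_add_two_eq hp2 ha, norm_neg]
      _ ≤ 2 * ‖S‖ + ((p - 2) * (m + 2) + 2) * (M ^ 2 * c ^ (m + 1)) :=
          norm_add_le_of_le (by simp) (hZ a ha)

theorem IsStandardSolution.norm_coeff_le (hf : IsStandardSolution p s t f) (hp : 5 ≤ p)
    {M : ℝ} (hM : 1 ≤ M) (hs : ∀ a ≠ 0, ‖s a‖ ≤ M) (ht : ∀ a ≠ 0, ‖t a‖ ≤ M) (n : ℕ) :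
    ∀ a ≠ 0, ‖coeff n (f a)‖ ≤ M * (4 * M) ^ n := by
  induction n using Nat.strong_induction_on with
  | _ n ih =>
    intro a ha
    match n, ih with
    | 0, _ => simpa [(hf a ha).1] using hs a ha
    | 1, _ => rw [(hf a ha).2.1]; nlinarith [ht a ha]
    | m + 2, ih =>
      calc ‖coeff (m + 2) (f a)‖ ≤ 4 * (M ^ 2 * (4 * M) ^ (m + 1)) :=
            hf.norm_coeff_add_two_le hp (by linarith) (by linarith) hs
              (fun j hj b hb => ih j (by omega) b hb) ha
        _ = M * (4 * M) ^ (m + 2) := by ring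

end StandardSolution

theorem statement9_general (p : ℕ) (hp5 : 5 ≤ p) [NeZero p]
    (s t : ZMod p → ℂ)
    (f : ZMod p → PowerSeries ℂ) (hf : IsStandardSolution p s t f) :
    ∃ C > (0 : ℝ), ∃ c > (0 : ℝ), ∀ a : ZMod p, a ≠ 0 → ∀ n : ℕ,
      ‖PowerSeries.coeff n (f a)‖ ≤ C * c ^ n := by
  obtain ⟨M, hM⟩ := Finite.exists_le fun a : ZMod p => max ‖s a‖ ‖t a‖
  have hM' (a : ZMod p) : max ‖s a‖ ‖t a‖ ≤ max M 1 := (hM a).trans (le_max_left _ _)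
  exact ⟨max M 1, by positivity, 4 * max M 1, by positivity, fun a ha n =>
    hf.norm_coeff_le hp5 (le_max_right _ _) (fun b _ => (le_max_left _ _).trans (hM' b))
      (fun b _ => (le_max_right _ _).trans (hM' b)) n a ha⟩

/-- The coefficients of the standard solution grow at most geometrically;
in particular each `f a` has positive radius of convergence. -/
theorem statement9 (p : ℕ) (hp : p.Prime) (hp5 : 5 ≤ p) [NeZero p]
    (s t : ZMod p → ℂ)
    (hodd : ∀ a : ZMod p, a ≠ 0 → s (-a) = - s a)
    (heven : ∀ a : ZMod p, a ≠ 0 → t (-a) = t a)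
    (hquad : ∀ a b c : ZMod p, a ≠ 0 → b ≠ 0 → c ≠ 0 → a + b + c = 0 →
      s a * s b + s b * s c + s c * s a + t a + t b + t c = 0)
    (f : ZMod p → PowerSeries ℂ) (hf : IsStandardSolution p s t f) :
    ∃ C > (0 : ℝ), ∃ c > (0 : ℝ), ∀ a : ZMod p, a ≠ 0 → ∀ n : ℕ,
      ‖PowerSeries.coeff n (f a)‖ ≤ C * c ^ n :=
  statement9_general p hp5 s t f hf
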